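/- arXiv:1612.04935 — 2 statements merged into one kernel-verified Lean document; each statement's English description precedes it below -/
import Mathlib

section
/- For α, β ∈ D_n: α ≤_J β if and only if rank(α) ≤ rank(β), where ≤_J is Green's J-preorder on (D_n, ⋄) and rank(α) is the number of blocks of α. -/
namespace DRel

abbrev Rl (n : ℕ) := Fin n → Fin n → Prop

/-- Ordinary relational composition. -/
def rcomp {n : ℕ} (α β : Rl n) : Rl n := fun x y => ∃ z, α x z ∧ β z y

/-- Converse relation. -/
def rinv {n : ℕ} (α : Rl n) : Rl n := fun x y => α y x

/-- α is difunctional iff α = α ∘ α⁻¹ ∘ α. -/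
def IsDifunctional {n : ℕ} (α : Rl n) : Prop := rcomp α (rcomp (rinv α) α) = α

/-- The operation α ⋄ β = {(x,y) : xα = βy ≠ ∅}. -/
def dia {n : ℕ} (α β : Rl n) : Rl n :=
  fun x y => ({z | α x z} = {z | β z y} ∧ ∃ z, α x z)

def dom {n : ℕ} (α : Rl n) : Set (Fin n) := {x | ∃ y, α x y}

def codom {n : ℕ} (α : Rl n) : Set (Fin n) := {y | ∃ x, α x y}

/-- The kernel of α: the set of blocks {x' : x'α = xα} for x in the domain. -/
def ker {n : ℕ} (α : Rl n) : Set (Set (Fin n)) :=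
  {A | ∃ x, x ∈ dom α ∧ A = {x' | {z | α x' z} = {z | α x z}}}

def coker {n : ℕ} (α : Rl n) : Set (Set (Fin n)) := ker (rinv α)

/-- The rank of a difunctional relation: the number of blocks. -/
noncomputable def rnk {n : ℕ} (α : Rl n) : ℕ := (ker α).ncard

/-- Subset generated by A under a binary operation. -/
def Gen {T : Type*} (mul : T → T → T) (A : Set T) : Set T :=
  ⋂₀ {C : Set T | A ⊆ C ∧ ∀ a ∈ C, ∀ b ∈ C, mul a b ∈ C}

/-- Stirling numbers of the second kind. -/
def stirling : ℕ → ℕ → ℕ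
  | 0, 0 => 1
  | 0, _ + 1 => 0
  | _ + 1, 0 => 0
  | n + 1, k + 1 => (k + 1) * stirling n (k + 1) + stirling n k

/-- Green's R-preorder on (D_n, ⋄): α ∈ β S¹. -/
def leR {n : ℕ} (α β : Rl n) : Prop := α = β ∨ ∃ γ, IsDifunctional γ ∧ α = dia β γ

/-- Green's L-preorder on (D_n, ⋄): α ∈ S¹ β. -/
def leL {n : ℕ} (α β : Rl n) : Prop := α = β ∨ ∃ γ, IsDifunctional γ ∧ α = dia γ β

/-- Green's J-preorder on (D_n, ⋄): α ∈ S¹ β S¹. -/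
def leJ {n : ℕ} (α β : Rl n) : Prop :=
  α = β ∨ (∃ γ, IsDifunctional γ ∧ (α = dia β γ ∨ α = dia γ β)) ∨
    ∃ γ δ, IsDifunctional γ ∧ IsDifunctional δ ∧ α = dia (dia γ β) δ

/-- Membership in I_n: all blocks singletons, i.e. a partial injection graph. -/
def InI {n : ℕ} (γ : Rl n) : Prop :=
  (∀ x y y', γ x y → γ x y' → y = y') ∧ (∀ x x' y, γ x y → γ x' y → x = x')

/-- β = λ_𝐀 for the partition 𝐀 = (A 0, …, A (k-1)) of {1,…,n}, blocks ordered by minima. -/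
def IsLambda {n k : ℕ} (A : Fin k → Set (Fin n)) (β : Rl n) : Prop :=
  (∀ i, (A i).Nonempty) ∧ (∀ i j, i ≠ j → Disjoint (A i) (A j)) ∧ (⋃ i, A i) = Set.univ ∧
  (∀ i j : Fin k, i < j → ∃ m ∈ A i, ∀ x ∈ A j, m < x) ∧
  (∀ x y, β x y ↔ ∃ i : Fin k, x ∈ A i ∧ (y : ℕ) = (i : ℕ))

/-- β = ρ_𝐀 for the partition 𝐀 = (A 0, …, A (k-1)) of {1,…,n}, blocks ordered by minima. -/
def IsRho {n k : ℕ} (A : Fin k → Set (Fin n)) (β : Rl n) : Prop :=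
  (∀ i, (A i).Nonempty) ∧ (∀ i j, i ≠ j → Disjoint (A i) (A j)) ∧ (⋃ i, A i) = Set.univ ∧
  (∀ i j : Fin k, i < j → ∃ m ∈ A i, ∀ x ∈ A j, m < x) ∧
  (∀ x y, β x y ↔ ∃ i : Fin k, (x : ℕ) = (i : ℕ) ∧ y ∈ A i)

variable {n : ℕ}

def row (a : Rl n) (x : Fin n) : Set (Fin n) := {z | a x z}
def col (a : Rl n) (y : Fin n) : Set (Fin n) := {z | a z y}

lemma dia_iff {a b : Rl n} {x y : Fin n} :
    dia a b x y ↔ (row a x = col b y ∧ (row a x).Nonempty) := Iff.rfl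

lemma mem_ker_iff {a : Rl n} {A : Set (Fin n)} :
    A ∈ ker a ↔ ∃ x, (row a x).Nonempty ∧ A = {x' | row a x' = row a x} := Iff.rfl

lemma rinv_rinv (a : Rl n) : rinv (rinv a) = a := rfl

lemma coker_rinv (a : Rl n) : coker (rinv a) = ker a := rfl

lemma row_ext {a : Rl n} {x x' : Fin n} : row a x' = row a x ↔ ∀ z, a x' z ↔ a x z :=
  Set.ext_iff

/-- Members of a kernel block all share the defining row. -/
lemma block_eq {a : Rl n} {A : Set (Fin n)} (hA : A ∈ ker a) {x : Fin n} (hx : x ∈ A) :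
    A = {x' | row a x' = row a x} ∧ (row a x).Nonempty := by
  obtain ⟨x₀, h₀, rfl⟩ := mem_ker_iff.1 hA
  have hxx : row a x = row a x₀ := hx
  refine ⟨?_, hxx ▸ h₀⟩
  ext x'
  show row a x' = row a x₀ ↔ row a x' = row a x
  rw [hxx]

lemma blocks_eq_of_inter {a : Rl n} {A A' : Set (Fin n)} (hA : A ∈ ker a) (hA' : A' ∈ ker a)
    {x : Fin n} (hx : x ∈ A) (hx' : x ∈ A') : A = A' := by
  rw [(block_eq hA hx).1, (block_eq hA' hx').1]

lemma block_nonempty {a : Rl n} {A : Set (Fin n)} (hA : A ∈ ker a) : A.Nonempty := by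
  obtain ⟨x₀, _, rfl⟩ := mem_ker_iff.1 hA
  exact ⟨x₀, rfl⟩

lemma rinv_difunctional {a : Rl n} (ha : IsDifunctional a) : IsDifunctional (rinv a) := by
  funext x y
  apply propext
  constructor
  · rintro ⟨z, hzx, w, hzw, hyw⟩
    have : rcomp a (rcomp (rinv a) a) y x := ⟨w, hyw, z, hzw, hzx⟩
    rw [ha] at this
    exact this
  · intro h
    exact ⟨y, h, x, h, h⟩

/-- Key difunctionality consequence: the column of y is the kernel block of any x with a x y. -/
lemma col_eq_block {a : Rl n} (ha : IsDifunctional a) {x y : Fin n} (hxy : a x y) :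
    col a y = {x' | row a x' = row a x} := by
  ext x'
  constructor
  · intro hx'
    have hx'' : a x' y := hx'
    show row a x' = row a x
    refine row_ext.2 fun z => ⟨fun h => ?_, fun h => ?_⟩
    · have h2 : rcomp a (rcomp (rinv a) a) x z := ⟨y, hxy, x', hx'', h⟩
      rw [ha] at h2; exact h2
    · have h2 : rcomp a (rcomp (rinv a) a) x' z := ⟨y, hx'', x, hxy, h⟩
      rw [ha] at h2; exact h2
  · intro hx'
    have h : row a x' = row a x := hx'
    show a x' y
    exact (row_ext.1 h y).2 hxy

/-- Dual form: the row of x is the coker block of any y with a x y. -/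
lemma row_eq_coblock {a : Rl n} (ha : IsDifunctional a) {x y : Fin n} (hxy : a x y) :
    row a x = {y' | col a y' = col a y} :=
  col_eq_block (rinv_difunctional ha) (show rinv a y x from hxy)

lemma row_mem_coker {a : Rl n} (ha : IsDifunctional a) {x : Fin n} (hx : (row a x).Nonempty) :
    row a x ∈ coker a := by
  obtain ⟨y, hy⟩ := hx
  exact mem_ker_iff.2 ⟨y, ⟨x, hy⟩, row_eq_coblock ha hy⟩

/-- The common row of a kernel block. -/
def rowSet (a : Rl n) (A : Set (Fin n)) : Set (Fin n) := {y | ∃ x ∈ A, a x y}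

lemma rowSet_eq {a : Rl n} {A : Set (Fin n)} (hA : A ∈ ker a) {x : Fin n} (hx : x ∈ A) :
    rowSet a A = row a x := by
  ext y
  constructor
  · rintro ⟨x', hx', h⟩
    have h1 : row a x' = row a x := by
      have e := (block_eq hA hx).1
      rw [e] at hx'
      exact hx'
    exact (row_ext.1 h1 y).1 h
  · intro h
    exact ⟨x, hx, h⟩

lemma ker_ncard_le_coker {a : Rl n} (ha : IsDifunctional a) :
    (ker a).ncard ≤ (coker a).ncard := by
  apply Set.ncard_le_ncard_of_injOn (rowSet a)
  · intro A hA
    obtain ⟨x, hx⟩ := block_nonempty hA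
    rw [rowSet_eq hA hx]
    exact row_mem_coker ha (block_eq hA hx).2
  · intro A hA A' hA' h
    obtain ⟨x, hx⟩ := block_nonempty hA
    obtain ⟨x', hx'⟩ := block_nonempty hA'
    rw [rowSet_eq hA hx, rowSet_eq hA' hx'] at h
    rw [(block_eq hA hx).1, (block_eq hA' hx').1, h]

lemma rnk_eq_coker_ncard {a : Rl n} (ha : IsDifunctional a) :
    rnk a = (coker a).ncard := by
  refine le_antisymm (ker_ncard_le_coker ha) ?_
  have := ker_ncard_le_coker (rinv_difunctional ha)
  rwa [coker_rinv] at this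

/-- Kernel of dia a b is contained in kernel of a. -/
lemma ker_dia_subset (a b : Rl n) : ker (dia a b) ⊆ ker a := by
  rintro A hA
  obtain ⟨x, hx, rfl⟩ := mem_ker_iff.1 hA
  obtain ⟨y, hy⟩ := hx
  obtain ⟨hrc, hne⟩ := dia_iff.1 hy
  refine mem_ker_iff.2 ⟨x, hne, ?_⟩
  ext x'
  show row (dia a b) x' = row (dia a b) x ↔ row a x' = row a x
  constructor
  · intro h
    have hy' : y ∈ row (dia a b) x' := by rw [h]; exact hy
    obtain ⟨hrc', _⟩ := dia_iff.1 hy'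
    rw [hrc', ← hrc]
  · intro h
    ext z
    constructor
    · intro hz
      obtain ⟨h1, h2⟩ := dia_iff.1 hz
      exact dia_iff.2 ⟨h.symm.trans h1, by rw [← h]; exact h2⟩
    · intro hz
      obtain ⟨h1, h2⟩ := dia_iff.1 hz
      exact dia_iff.2 ⟨h.trans h1, by rw [h]; exact h2⟩

/-- The rows of dia a b are coker blocks of b. -/
lemma ncard_ker_dia_le_coker (a b : Rl n) :
    (ker (dia a b)).ncard ≤ (coker b).ncard := by
  apply Set.ncard_le_ncard_of_injOn (rowSet (dia a b))
  · intro A hA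
    obtain ⟨x, hx⟩ := block_nonempty hA
    rw [rowSet_eq hA hx]
    obtain ⟨y₀, hy₀⟩ := (block_eq hA hx).2
    obtain ⟨hrc, hra⟩ := dia_iff.1 hy₀
    have hy₀cod : (row (rinv b) y₀).Nonempty := by
      obtain ⟨z, hz⟩ := hra
      have : z ∈ col b y₀ := by rw [← hrc]; exact hz
      exact ⟨z, this⟩
    refine mem_ker_iff.2 ⟨y₀, hy₀cod, ?_⟩
    ext y
    show dia a b x y ↔ row (rinv b) y = row (rinv b) y₀
    have hcr : ∀ y', row (rinv b) y' = col b y' := fun _ => rfl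
    constructor
    · intro hy
      obtain ⟨h1, _⟩ := dia_iff.1 hy
      rw [hcr, hcr, ← h1, ← hrc]
    · intro hy
      rw [hcr, hcr] at hy
      exact dia_iff.2 ⟨by rw [hy, ← hrc], hra⟩
  · intro A hA A' hA' h
    obtain ⟨x, hx⟩ := block_nonempty hA
    obtain ⟨x', hx'⟩ := block_nonempty hA'
    rw [rowSet_eq hA hx, rowSet_eq hA' hx'] at h
    rw [(block_eq hA hx).1, (block_eq hA' hx').1, h]

lemma difunc_of_rect {S : Set (Set (Fin n))} {P Q : Set (Fin n) → Set (Fin n)}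
    (hP : ∀ A ∈ S, ∀ A' ∈ S, ∀ x, x ∈ P A → x ∈ P A' → A = A')
    (hQ : ∀ A ∈ S, ∀ A' ∈ S, ∀ y, y ∈ Q A → y ∈ Q A' → A = A') :
    IsDifunctional (fun x y => ∃ A ∈ S, x ∈ P A ∧ y ∈ Q A) := by
  funext x y
  apply propext
  constructor
  · rintro ⟨z, ⟨A1, h1, hx1, hz1⟩, w, ⟨A2, h2, hw2, hz2⟩, A3, h3, hw3, hy3⟩
    have e12 : A1 = A2 := hQ _ h1 _ h2 z hz1 hz2
    have e23 : A2 = A3 := hP _ h2 _ h3 w hw2 hw3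
    exact ⟨A1, h1, hx1, by rw [e12, e23]; exact hy3⟩
  · rintro ⟨A, hA, hx, hy⟩
    exact ⟨y, ⟨A, hA, hx, hy⟩, x, ⟨A, hA, hx, hy⟩, A, hA, hx, hy⟩

lemma leJ_of_rnk_le {α β : Rl n} (hα : IsDifunctional α) (hβ : IsDifunctional β)
    (h : rnk α ≤ rnk β) : leJ α β := by
  classical
  have hs : (ker α).Finite := Set.toFinite _
  have ht : (ker β).Finite := Set.toFinite _
  have hen : (ker α).encard ≤ (ker β).encard := by
    rw [← hs.cast_ncard_eq, ← ht.cast_ncard_eq]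
    exact_mod_cast h
  obtain ⟨f, hfm, hfi⟩ := hs.exists_injOn_of_encard_le hen
  have hfmem : ∀ A ∈ ker α, f A ∈ ker β := fun A hA => hfm hA
  -- the rectangles
  set D : Set (Fin n) → Set (Fin n) := fun A => {y | col β y = f A} with hDdef
  set B : Set (Fin n) → Set (Fin n) := fun A => rowSet α A with hBdef
  set γ : Rl n := fun x z => ∃ A ∈ ker α, x ∈ A ∧ z ∈ f A with hγdef
  set δ : Rl n := fun z y => ∃ A ∈ ker α, z ∈ D A ∧ y ∈ B A with hδdef
  -- basic facts
  have hfA_ne : ∀ A ∈ ker α, (f A).Nonempty := fun A hA => block_nonempty (hfmem A hA)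
  have hD_ne : ∀ A ∈ ker α, (D A).Nonempty := by
    intro A hA
    obtain ⟨x₀, hx₀⟩ := hfA_ne A hA
    obtain ⟨y₀, hy₀⟩ := (block_eq (hfmem A hA) hx₀).2
    refine ⟨y₀, ?_⟩
    show col β y₀ = f A
    rw [col_eq_block hβ hy₀, (block_eq (hfmem A hA) hx₀).1]
  have hD_inj : ∀ A ∈ ker α, ∀ A' ∈ ker α, ∀ y, y ∈ D A → y ∈ D A' → A = A' := by
    intro A hA A' hA' y hy hy'
    have e : f A = f A' := by
      have h1 : col β y = f A := hy
      have h2 : col β y = f A' := hy'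
      rw [← h1, h2]
    exact hfi hA hA' e
  have hB_inj : ∀ A ∈ ker α, ∀ A' ∈ ker α, ∀ y, y ∈ B A → y ∈ B A' → A = A' := by
    intro A hA A' hA' y hy hy'
    obtain ⟨x, hx, hxy⟩ := hy
    obtain ⟨x', hx', hxy'⟩ := hy'
    have hcol : x' ∈ col α y := hxy'
    rw [col_eq_block hα hxy] at hcol
    have hrr : row α x' = row α x := hcol
    rw [(block_eq hA hx).1, (block_eq hA' hx').1]
    ext x''
    show row α x'' = row α x ↔ row α x'' = row α x'
    rw [hrr]
  have hA_inj : ∀ A ∈ ker α, ∀ A' ∈ ker α, ∀ x, x ∈ A → x ∈ A' → A = A' := by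
    intro A hA A' hA' x hx hx'
    exact blocks_eq_of_inter hA hA' hx hx'
  have hfblk_inj : ∀ A ∈ ker α, ∀ A' ∈ ker α, ∀ z, z ∈ f A → z ∈ f A' → A = A' := by
    intro A hA A' hA' z hz hz'
    exact hfi hA hA' (blocks_eq_of_inter (hfmem A hA) (hfmem A' hA') hz hz')
  -- difunctionality of γ and δ
  have hγdif : IsDifunctional γ := by
    rw [hγdef]
    exact difunc_of_rect (P := fun A => A) (Q := f) hA_inj hfblk_inj
  have hδdif : IsDifunctional δ := by
    rw [hδdef]
    exact difunc_of_rect (P := D) (Q := B) hD_inj hB_inj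
  -- rows of γ
  have hγrow : ∀ A ∈ ker α, ∀ x ∈ A, row γ x = f A := by
    intro A hA x hx
    ext z
    constructor
    · rintro ⟨A', hA', hx', hz'⟩
      rw [hA_inj A hA A' hA' x hx hx']
      exact hz'
    · intro hz
      exact ⟨A, hA, hx, hz⟩
  -- rows of ε = dia γ β
  have hεrow : ∀ A ∈ ker α, ∀ x ∈ A, row (dia γ β) x = D A := by
    intro A hA x hx
    ext y
    constructor
    · intro hy
      obtain ⟨h1, _⟩ := dia_iff.1 hy
      show col β y = f A
      rw [← h1, hγrow A hA x hx]
    · intro hy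
      have h1 : col β y = f A := hy
      refine dia_iff.2 ⟨?_, ?_⟩
      · rw [hγrow A hA x hx, h1]
      · rw [hγrow A hA x hx]; exact hfA_ne A hA
  -- columns of δ
  have hδcol : ∀ A ∈ ker α, ∀ y ∈ B A, col δ y = D A := by
    intro A hA y hy
    ext z
    constructor
    · rintro ⟨A', hA', hzD, hyB⟩
      rw [hB_inj A hA A' hA' y hy hyB]
      exact hzD
    · intro hz
      exact ⟨A, hA, hz, hy⟩
  -- empty rows for x outside dom α
  have hγempty : ∀ x, ¬ (row α x).Nonempty → ∀ z, ¬ γ x z := by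
    rintro x hx z ⟨A, hA, hxA, _⟩
    exact hx (block_eq hA hxA).2
  -- the main identity
  have hmain : α = dia (dia γ β) δ := by
    funext x y
    apply propext
    by_cases hx : (row α x).Nonempty
    · have hA : {x' | row α x' = row α x} ∈ ker α := mem_ker_iff.2 ⟨x, hx, rfl⟩
      set A := {x' | row α x' = row α x} with hAdef
      have hxA : x ∈ A := by show row α x = row α x; rfl
      have hre : row (dia γ β) x = D A := hεrow A hA x hxA
      have hBA : B A = row α x := rowSet_eq hA hxA
      constructor
      · intro hαxy
        have hyB : y ∈ B A := by rw [hBA]; exact hαxy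
        refine dia_iff.2 ⟨?_, ?_⟩
        · rw [hre, hδcol A hA y hyB]
        · rw [hre]; exact hD_ne A hA
      · intro hd
        obtain ⟨h1, _⟩ := dia_iff.1 hd
        rw [hre] at h1
        obtain ⟨z, hz⟩ := hD_ne A hA
        have hzc : z ∈ col δ y := by rw [← h1]; exact hz
        obtain ⟨A', hA', hzD', hyB'⟩ := hzc
        have e : A = A' := hD_inj A hA A' hA' z hz hzD'
        rw [← e, hBA] at hyB'
        exact hyB'
    · refine iff_of_false (fun hαxy => hx ⟨y, hαxy⟩) (fun hd => ?_)
      obtain ⟨_, h2⟩ := dia_iff.1 hd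
      obtain ⟨y', hy'⟩ := h2
      obtain ⟨_, h4⟩ := dia_iff.1 hy'
      obtain ⟨z, hz⟩ := h4
      exact hγempty x hx z hz
  exact Or.inr (Or.inr ⟨γ, δ, hγdif, hδdif, hmain⟩)

/-- For α, β ∈ D_n: α ≤_J β iff rank(α) ≤ rank(β). -/
theorem stmt5 (n : ℕ) (hn : 0 < n) (α β : Rl n)
    (hα : IsDifunctional α) (hβ : IsDifunctional β) :
    leJ α β ↔ rnk α ≤ rnk β := by
  constructor
  · intro hJ
    rcases hJ with rfl | ⟨γ, hγ, (rfl | rfl)⟩ | ⟨γ, δ, hγ, hδ, rfl⟩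
    · exact le_refl _
    · exact Set.ncard_le_ncard (ker_dia_subset β γ) (Set.toFinite _)
    · calc rnk (dia γ β) ≤ (coker β).ncard := ncard_ker_dia_le_coker γ β
        _ = rnk β := (rnk_eq_coker_ncard hβ).symm
    · calc rnk (dia (dia γ β) δ)
          ≤ (ker (dia γ β)).ncard :=
            Set.ncard_le_ncard (ker_dia_subset _ _) (Set.toFinite _)
        _ ≤ (coker β).ncard := ncard_ker_dia_le_coker γ β
        _ = rnk β := (rnk_eq_coker_ncard hβ).symm
  · intro h
    exact leJ_of_rnk_le hα hβ h

end DRel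
end

section
/- The ideals of the semigroup (D_n, ⋄) are exactly the sets I_r = {α ∈ D_n : rank(α) ≤ r} for 0 ≤ r ≤ n, and they form a chain under inclusion. -/
namespace DRel

section Aux

variable {n : ℕ}

/-- The set of nonempty image sets of a relation. -/
def imgset (α : Rl n) : Set (Set (Fin n)) :=
  {S | ∃ x, (∃ y, α x y) ∧ S = {z | α x z}}

lemma difunc_iff (α : Rl n) :
    IsDifunctional α ↔ ∀ a b c d, α a b → α c b → α c d → α a d := by
  constructor
  · intro h a b c d hab hcb hcd
    have : rcomp α (rcomp (rinv α) α) a d := ⟨b, hab, c, hcb, hcd⟩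
    rwa [h] at this
  · intro h
    show rcomp α (rcomp (rinv α) α) = α
    funext x y
    apply propext
    constructor
    · rintro ⟨z, hxz, c, hcz, hcy⟩
      exact h x z c y hxz hcz hcy
    · intro hxy
      exact ⟨y, hxy, x, hxy, hxy⟩

lemma rinv_difunc {α : Rl n} (h : IsDifunctional α) : IsDifunctional (rinv α) := by
  rw [difunc_iff] at h ⊢
  intro a b c d hab hcb hcd
  exact h d c b a hcd hcb hab

lemma mem_imgset {α : Rl n} {x : Fin n} (hx : ∃ y, α x y) : {z | α x z} ∈ imgset α :=
  ⟨x, hx, rfl⟩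

lemma imgset_nonempty {α : Rl n} {S : Set (Fin n)} (hS : S ∈ imgset α) : S.Nonempty := by
  obtain ⟨x, ⟨y, hy⟩, rfl⟩ := hS
  exact ⟨y, hy⟩

lemma imgset_eq_of_mem {α : Rl n} (h : IsDifunctional α) {S S' : Set (Fin n)}
    (hS : S ∈ imgset α) (hS' : S' ∈ imgset α) {z : Fin n} (hz : z ∈ S) (hz' : z ∈ S') :
    S = S' := by
  rw [difunc_iff] at h
  obtain ⟨x, -, rfl⟩ := hS
  obtain ⟨x', -, rfl⟩ := hS'
  ext w
  exact ⟨fun hw => h x' z x w hz' hz hw, fun hw => h x z x' w hz hz' hw⟩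

lemma rnk_eq_imgset (α : Rl n) : rnk α = (imgset α).ncard := by
  classical
  set F : Set (Fin n) → Set (Fin n) := fun A => {z | ∃ x ∈ A, α x z} with hF
  have hval : ∀ x : Fin n, F {x' | {z | α x' z} = {z | α x z}} = {z | α x z} := by
    intro x
    ext z
    constructor
    · rintro ⟨x', hx', hz⟩
      have : z ∈ {w | α x w} := hx' ▸ (show z ∈ {w | α x' w} from hz)
      exact this
    · intro hz
      exact ⟨x, rfl, hz⟩
  have hinj : Set.InjOn F (ker α) := by
    rintro A ⟨x₁, hx₁, rfl⟩ A' ⟨x₂, hx₂, rfl⟩ hFA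
    rw [hval, hval] at hFA
    ext x'
    show {z | α x' z} = {z | α x₁ z} ↔ {z | α x' z} = {z | α x₂ z}
    rw [hFA]
  have himg : F '' (ker α) = imgset α := by
    ext S
    constructor
    · rintro ⟨A, ⟨x, hx, rfl⟩, rfl⟩
      rw [hval]
      exact mem_imgset hx
    · rintro ⟨x, hx, rfl⟩
      exact ⟨_, ⟨x, hx, rfl⟩, hval x⟩
  rw [rnk, ← Set.ncard_image_of_injOn hinj, himg]

lemma rnk_le_n {α : Rl n} (hn : 0 < n) (h : IsDifunctional α) : rnk α ≤ n := by
  classical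
  rw [rnk_eq_imgset]
  set g : Set (Fin n) → Fin n := fun S => if hS : S.Nonempty then hS.choose else ⟨0, hn⟩
  have hmem : ∀ S ∈ imgset α, g S ∈ S := by
    intro S hS
    have hne := imgset_nonempty hS
    simp only [g, dif_pos hne]
    exact hne.choose_spec
  have hinj : Set.InjOn g (imgset α) := by
    intro S hS S' hS' hgs
    exact imgset_eq_of_mem h hS hS' (hmem S hS) (hgs.symm ▸ hmem S' hS')
  calc (imgset α).ncard ≤ (Set.univ : Set (Fin n)).ncard :=
        Set.ncard_le_ncard_of_injOn g (fun a _ => Set.mem_univ _) hinj Set.finite_univ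
    _ = n := by simp [Set.ncard_univ]

lemma rnk_rinv {α : Rl n} (h : IsDifunctional α) : rnk (rinv α) = rnk α := by
  classical
  have h4 := (difunc_iff α).mp h
  set F : Set (Fin n) → Set (Fin n) := fun S => {x' | ∃ z ∈ S, α x' z} with hF
  have hval : ∀ x z₀ : Fin n, α x z₀ → F {z | α x z} = {x' | α x' z₀} := by
    intro x z₀ hxz₀
    ext x'
    constructor
    · rintro ⟨z, hxz, hx'z⟩
      exact h4 x' z x z₀ hx'z hxz hxz₀
    · intro hx'
      exact ⟨z₀, hxz₀, hx'⟩
  have hinj : Set.InjOn F (imgset α) := by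
    rintro S hS S' hS' hFS
    obtain ⟨x, ⟨z₀, hz₀⟩, rfl⟩ := hS
    obtain ⟨x', ⟨z₀', hz₀'⟩, rfl⟩ := hS'
    rw [hval x z₀ hz₀, hval x' z₀' hz₀'] at hFS
    have hx : x ∈ {x'' | α x'' z₀'} := by
      rw [← hFS]; exact hz₀
    exact imgset_eq_of_mem h (mem_imgset ⟨z₀, hz₀⟩) (mem_imgset ⟨z₀', hz₀'⟩)
      (show z₀' ∈ {z | α x z} from hx) hz₀'
  have himg : F '' (imgset α) = imgset (rinv α) := by
    ext T
    constructor
    · rintro ⟨S, ⟨x, ⟨z₀, hz₀⟩, rfl⟩, rfl⟩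
      rw [hval x z₀ hz₀]
      exact ⟨z₀, ⟨x, hz₀⟩, rfl⟩
    · rintro ⟨y, ⟨x₀, hx₀⟩, rfl⟩
      exact ⟨{z | α x₀ z}, mem_imgset ⟨y, hx₀⟩, hval x₀ y hx₀⟩
  rw [rnk_eq_imgset, rnk_eq_imgset, ← himg, Set.ncard_image_of_injOn hinj]

lemma dia_difunc (α β : Rl n) : IsDifunctional (dia α β) := by
  rw [difunc_iff]
  rintro a b c d ⟨hab, w, hw⟩ ⟨hcb, -⟩ ⟨hcd, -⟩
  exact ⟨hab.trans (hcb.symm.trans hcd), w, hw⟩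

/-- The key map computing values of `dia α β` image classes. -/
lemma dia_img_classes (α β : Rl n) {x : Fin n} {y₀ : Fin n} (h : dia α β x y₀) :
    {z | ∃ y ∈ {y | dia α β x y}, β z y} = {z | α x z} := by
  ext z
  constructor
  · rintro ⟨y, ⟨hy, -⟩, hzy⟩
    have : z ∈ {w | β w y} := hzy
    rw [← hy] at this
    exact this
  · intro hz
    refine ⟨y₀, h, ?_⟩
    have : z ∈ {w | α x w} := hz
    rw [h.1] at this
    exact this

lemma dia_inj_on (α β : Rl n) :
    Set.InjOn (fun C => {z | ∃ y ∈ C, β z y}) (imgset (dia α β)) := by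
  rintro C ⟨x, ⟨y₀, hy₀⟩, rfl⟩ C' ⟨x', ⟨y₀', hy₀'⟩, rfl⟩ hG0
  have hG : {z | ∃ y ∈ {y | dia α β x y}, β z y} = {z | ∃ y ∈ {y | dia α β x' y}, β z y} := hG0
  rw [dia_img_classes α β hy₀, dia_img_classes α β hy₀'] at hG
  ext y
  constructor
  · rintro ⟨hset, hne⟩
    exact ⟨hG ▸ hset, hy₀'.2⟩
  · rintro ⟨hset, hne⟩
    exact ⟨hG ▸ hset, hy₀.2⟩

lemma rnk_dia_le_left (α β : Rl n) : rnk (dia α β) ≤ rnk α := by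
  classical
  rw [rnk_eq_imgset, rnk_eq_imgset]
  refine Set.ncard_le_ncard_of_injOn _ ?_ (dia_inj_on α β) (Set.toFinite _)
  rintro C ⟨x, ⟨y₀, hy₀⟩, rfl⟩
  show {z | ∃ y ∈ {y | dia α β x y}, β z y} ∈ imgset α
  rw [dia_img_classes α β hy₀]
  exact mem_imgset hy₀.2

lemma rnk_dia_le_right {α β : Rl n} (hβ : IsDifunctional β) : rnk (dia α β) ≤ rnk β := by
  classical
  rw [← rnk_rinv hβ, rnk_eq_imgset, rnk_eq_imgset]
  refine Set.ncard_le_ncard_of_injOn _ ?_ (dia_inj_on α β) (Set.toFinite _)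
  rintro C ⟨x, ⟨y₀, hy₀⟩, rfl⟩
  show {z | ∃ y ∈ {y | dia α β x y}, β z y} ∈ imgset (rinv β)
  rw [dia_img_classes α β hy₀]
  refine ⟨y₀, ?_, ?_⟩
  · obtain ⟨w, hw⟩ := hy₀.2
    have : w ∈ {z | α x z} := hw
    rw [hy₀.1] at this
    exact ⟨w, this⟩
  · exact hy₀.1

lemma bot_difunc : IsDifunctional (fun _ _ => False : Rl n) := by
  rw [difunc_iff]; tauto

lemma rnk_bot : rnk (fun _ _ => False : Rl n) = 0 := by
  rw [rnk_eq_imgset]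
  convert Set.ncard_empty (Set (Fin n))
  ext S
  simp only [imgset, Set.mem_setOf_eq, Set.mem_empty_iff_false, iff_false]
  rintro ⟨x, ⟨y, hy⟩, -⟩
  exact hy

lemma factor {α β : Rl n} (hα : IsDifunctional α) (hβ : IsDifunctional β)
    (hle : rnk β ≤ rnk α) :
    ∃ γ δ : Rl n, IsDifunctional γ ∧ IsDifunctional δ ∧ dia (dia γ α) δ = β := by
  classical
  have hα4 := (difunc_iff α).mp hα
  have hβ4 := (difunc_iff β).mp hβ
  have hαinv := rinv_difunc hα
  -- an injection from imgset β into imgset (rinv α)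
  have hcard : (imgset β).encard ≤ (imgset (rinv α)).encard := by
    rw [← (Set.toFinite (imgset β)).cast_ncard_eq, ← (Set.toFinite (imgset (rinv α))).cast_ncard_eq]
    rw [← rnk_eq_imgset, ← rnk_eq_imgset, rnk_rinv hα]
    exact_mod_cast hle
  obtain ⟨f, hfmap, hfinj⟩ := (Set.toFinite (imgset β)).exists_injOn_of_encard_le hcard
  have hfmem : ∀ S ∈ imgset β, f S ∈ imgset (rinv α) := fun S hS => hfmap hS
  have hfne : ∀ S ∈ imgset β, (f S).Nonempty := fun S hS => imgset_nonempty (hfmem S hS)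
  -- the two partial bijections
  set γ : Rl n := fun x z => (∃ w, β x w) ∧ z ∈ f {w | β x w} with hγdef
  set δ : Rl n := fun z y => (∃ v, β v y) ∧ {u | α u z} = f {w | ∃ v, β v y ∧ β v w} with hδdef
  -- the coimage class associated to y
  have hS : ∀ v y, β v y → {w | ∃ v', β v' y ∧ β v' w} = {w | β v w} := by
    intro v y hvy
    ext w
    constructor
    · rintro ⟨v', hv'y, hv'w⟩
      exact hβ4 v y v' w hvy hv'y hv'w
    · intro hw
      exact ⟨v, hvy, hw⟩
  have hγset : ∀ x : Fin n, (∃ w, β x w) → {w | γ x w} = f {w | β x w} := by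
    intro x hx
    ext w
    exact ⟨fun hw => hw.2, fun hw => ⟨hx, hw⟩⟩
  refine ⟨γ, δ, ?_, ?_, ?_⟩
  · -- γ difunctional
    rw [difunc_iff]
    rintro a b c d ⟨ha, hab⟩ ⟨hc, hcb⟩ ⟨-, hcd⟩
    have heq : f {w | β a w} = f {w | β c w} :=
      imgset_eq_of_mem hαinv (hfmem _ (mem_imgset ha)) (hfmem _ (mem_imgset hc)) hab hcb
    exact ⟨ha, heq ▸ hcd⟩
  · -- δ difunctional
    rw [difunc_iff]
    rintro a b c d ⟨hb, hab⟩ ⟨-, hcb⟩ ⟨hd, hcd⟩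
    exact ⟨hd, hab.trans (hcb.symm.trans hcd)⟩
  · -- the factorization
    funext x y
    apply propext
    constructor
    · -- dia (dia γ α) δ x y → β x y
      rintro ⟨hset, z₁, hz₁⟩
      obtain ⟨heq₁, w₁, hw₁⟩ := hz₁
      have hx : ∃ w, β x w := hw₁.1
      have hz₁' : δ z₁ y := by
        have : z₁ ∈ {z | δ z y} := hset ▸ (show z₁ ∈ {z | dia γ α x z} from ⟨heq₁, w₁, hw₁⟩)
        exact this
      obtain ⟨⟨v, hvy⟩, hδ⟩ := hz₁'
      rw [hS v y hvy] at hδ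
      have hfa : f {w | β x w} = {w | α w z₁} := by rw [← hγset x hx]; exact heq₁
      have hfeq : f {w | β x w} = f {w | β v w} := by rw [hfa, hδ]
      have hxv : {w | β x w} = {w | β v w} :=
        hfinj (mem_imgset hx) (mem_imgset ⟨y, hvy⟩) hfeq
      obtain ⟨w, hxw⟩ := hx
      have hvw : β v w := by
        have : w ∈ {w' | β x w'} := hxw
        rw [hxv] at this; exact this
      exact hβ4 x w v y hxw hvw hvy
    · -- β x y → dia (dia γ α) δ x y
      intro hxy
      have hx : ∃ w, β x w := ⟨y, hxy⟩
      obtain ⟨z₀, ⟨w₀, hw₀⟩, hfeq⟩ := hfmem _ (mem_imgset hx)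
      have claim1 : {z | dia γ α x z} = {z | {u | α u z} = f {w | β x w}} := by
        ext z
        constructor
        · rintro ⟨hset, -⟩
          rw [hγset x hx] at hset
          exact hset.symm
        · intro hz
          obtain ⟨w, hw⟩ := hfne _ (mem_imgset hx)
          refine ⟨?_, w, hx, hw⟩
          rw [hγset x hx, hz]
      have claim2 : {z | δ z y} = {z | {u | α u z} = f {w | β x w}} := by
        ext z
        constructor
        · rintro ⟨-, hδ⟩
          rw [hS x y hxy] at hδ
          exact hδ
        · intro hz
          refine ⟨⟨x, hxy⟩, ?_⟩
          rw [hS x y hxy]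
          exact hz
      refine ⟨claim1.trans claim2.symm, z₀, ?_⟩
      have : z₀ ∈ {z | {u | α u z} = f {w | β x w}} := hfeq.symm
      rw [← claim1] at this
      exact this

end Aux

/-- The ideals of (D_n, ⋄) are exactly the sets I_r = {α ∈ D_n : rank α ≤ r}, 0 ≤ r ≤ n,
and they form a chain under inclusion. -/
theorem stmt7 (n : ℕ) (hn : 0 < n) :
    (∀ I : Set (Rl n), I ⊆ {α | IsDifunctional α} →
      ((I.Nonempty ∧ ∀ α ∈ I, ∀ β : Rl n, IsDifunctional β → dia α β ∈ I ∧ dia β α ∈ I)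
        ↔ ∃ r ≤ n, I = {α | IsDifunctional α ∧ rnk α ≤ r})) ∧
    (∀ r s : ℕ, r ≤ s →
      {α : Rl n | IsDifunctional α ∧ rnk α ≤ r} ⊆ {α | IsDifunctional α ∧ rnk α ≤ s}) := by
  constructor
  · intro I hI
    constructor
    · rintro ⟨hne, hcl⟩
      have hbdd : BddAbove (rnk '' I) := by
        refine ⟨n, ?_⟩
        rintro k ⟨a, ha, rfl⟩
        exact rnk_le_n hn (hI ha)
      have hRne : (rnk '' I).Nonempty := hne.image _
      obtain ⟨α₀, hα₀I, hα₀r⟩ := Nat.sSup_mem hRne hbdd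
      refine ⟨sSup (rnk '' I), by rw [← hα₀r]; exact rnk_le_n hn (hI hα₀I), ?_⟩
      ext β
      constructor
      · intro hβ
        exact ⟨hI hβ, le_csSup hbdd ⟨β, hβ, rfl⟩⟩
      · rintro ⟨hβd, hβr⟩
        obtain ⟨γ, δ, hγ, hδ, heq⟩ := factor (hI hα₀I) hβd (by rw [hα₀r]; exact hβr)
        have h1 : dia γ α₀ ∈ I := (hcl α₀ hα₀I γ hγ).2
        have h2 : dia (dia γ α₀) δ ∈ I := (hcl _ h1 δ hδ).1
        rwa [heq] at h2
    · rintro ⟨r, hr, rfl⟩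
      refine ⟨⟨fun _ _ => False, bot_difunc, by rw [rnk_bot]; exact Nat.zero_le r⟩, ?_⟩
      rintro α ⟨hαd, hαr⟩ β hβd
      exact ⟨⟨dia_difunc α β, (rnk_dia_le_left α β).trans hαr⟩,
        ⟨dia_difunc β α, (rnk_dia_le_right hαd).trans hαr⟩⟩
  · rintro r s hrs α ⟨h1, h2⟩
    exact ⟨h1, h2.trans hrs⟩

end DRel
end
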